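/- Let K be a field of characteristic 0 and U a nonempty finite subset of ℤ with |U| = u and 2k ≤ u, and let d satisfy 2d ≤ k. Let H_{U,k,d} be the matrix (∂^{M(V)} ∂^{M(V')} Φ_{U,k})_{V,V' ∈ C(U,2d)} with entries in P_U. Then the evaluation of det(H_{U,k,d}) at x_e = 1 for all edges e is a nonzero element of K; in particular det(H_{U,k,d}) is a nonzero polynomial. -/

import Mathlib

open MvPolynomial Finset

noncomputable section

/-- The set of matchings with exactly `k` edges of the complete graph on vertex set `V ⊆ ℤ`:
sets of `k` pairwise disjoint 2-element subsets of `V`. -/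
def matchings (V : Finset ℤ) (k : ℕ) : Finset (Finset (Finset ℤ)) :=
  (V.powersetCard 2).powerset.filter fun M =>
    M.card = k ∧ ∀ e ∈ M, ∀ f ∈ M, e ≠ f → Disjoint e f

/-- `S` is a matching of the complete graph on vertex set `V`. -/
def IsMatching (V : Finset ℤ) (S : Finset (Finset ℤ)) : Prop :=
  S ⊆ V.powersetCard 2 ∧ ∀ e ∈ S, ∀ f ∈ S, e ≠ f → Disjoint e f

/-- The weighted generating function `Φ_{V,k} = Σ_{M ∈ M(V,k)} x^M` of `k`-edge matchings,
an element of the polynomial ring with variables indexed by (potential) edges. -/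
def Phi (K : Type*) [Field K] (V : Finset ℤ) (k : ℕ) : MvPolynomial (Finset ℤ) K :=
  ∑ M ∈ matchings V k, ∏ e ∈ M, X e

/-- The differential operator `∂^S = Π_{i ∈ S} ∂/∂x_i` applied to `p`. -/
def dset {K : Type*} [CommSemiring K] {ι : Type*} [DecidableEq ι]
    (S : Finset ι) (p : MvPolynomial ι K) : MvPolynomial ι K :=
  S.toList.foldr (fun i q => pderiv i q) p

/-- The differential operator `∂^m = Π_i (∂/∂x_i)^{m i}` of a monomial exponent `m`. -/
def dmon {K : Type*} [CommSemiring K] {ι : Type*} [DecidableEq ι]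
    (m : ι →₀ ℕ) (p : MvPolynomial ι K) : MvPolynomial ι K :=
  m.support.toList.foldr (fun i q => (⇑(pderiv (R := K) i))^[m i] q) p

/-- The linear map `f ↦ f(∂)Φ`, where `f(∂)` is obtained from `f` by substituting
`∂/∂x_i` for `x_i`. -/
def diffOp (K : Type*) [Field K] {ι : Type*} [DecidableEq ι]
    (Φ : MvPolynomial ι K) : MvPolynomial ι K →ₗ[K] MvPolynomial ι K :=
  (basisMonomials ι K).constr K fun m => dmon m Φ

/-- The annihilator `Ann(Φ) = {f : f(∂)Φ = 0}`. -/
def Ann (K : Type*) [Field K] {ι : Type*} [DecidableEq ι]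
    (Φ : MvPolynomial ι K) : Submodule K (MvPolynomial ι K) :=
  LinearMap.ker (diffOp K Φ)

/-- The canonical matching `M(V) = {{v₁,v₂},{v₃,v₄},…}` on `V = {v₁ < v₂ < ⋯}`. -/
def canonMatching (V : Finset ℤ) : Finset (Finset ℤ) :=
  (Finset.range (V.card / 2)).image fun i =>
    ({(V.sort (· ≤ ·)).getD (2 * i) 0, (V.sort (· ≤ ·)).getD (2 * i + 1) 0} : Finset ℤ)

/-- The `n`-th elementary symmetric polynomial in the variables indexed by `U`. -/
def elemSymm (K : Type*) [Field K] {ι : Type*} (U : Finset ι) (n : ℕ) : MvPolynomial ι K :=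
  ∑ S ∈ U.powersetCard n, ∏ i ∈ S, X i

end

/-! At `x = 1` the entry `(V, V')` of `H_{U,k,d}` counts the `k`-matchings of `U` containing
`M(V')` and the edges of `M(V)` outside it. Such a matching exists only if `V ∩ V' = ∅`, and
then the count is the number `c > 0` of `(k - 2d)`-matchings on the `|U| - 4d` remaining
vertices. So the evaluated matrix is `c` times the disjointness matrix of the `2d`-subsets of
`U`. For `2t ≤ |U|` the disjointness matrix of the `t`-subsets is invertible: its inverse has
the form `(B, C) ↦ g |B ∩ C|`, where `g` solves a lower triangular system whose diagonal
entries are the binomials `C(|U| - t - m, t - m) ≠ 0`. -/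

section PartialDerivatives

variable {R : Type*} [CommSemiring R] {σ : Type*} [DecidableEq σ]

theorem pderiv_prod_X (i : σ) (M : Finset σ) :
    pderiv i (∏ e ∈ M, (X e : MvPolynomial σ R)) =
      if i ∈ M then ∏ e ∈ M.erase i, X e else 0 := by
  induction M using Finset.induction_on with
  | empty => simp
  | @insert a M ha ih =>
    rw [prod_insert ha, pderiv_mul, pderiv_X, ih]
    by_cases hia : i = a
    · subst hia
      simp [ha]
    · by_cases hiM : i ∈ M
      · rw [if_pos hiM, if_pos (mem_insert_of_mem hiM), erase_insert_of_ne (Ne.symm hia),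
          prod_insert (fun h => ha (mem_of_mem_erase h))]
        simp [hia]
      · simp [hia, hiM]

theorem foldr_pderiv_prod_X {l : List σ} (hl : l.Nodup) (M : Finset σ) :
    l.foldr (fun i q => pderiv i q) (∏ e ∈ M, (X e : MvPolynomial σ R)) =
      if l.toFinset ⊆ M then ∏ e ∈ M \ l.toFinset, X e else 0 := by
  induction l with
  | nil => simp
  | cons a l ih =>
    obtain ⟨hal, hl⟩ := List.nodup_cons.mp hl
    rw [List.foldr_cons, ih hl]
    by_cases h : l.toFinset ⊆ M
    · have ha : a ∈ M \ l.toFinset ↔ a ∈ M := by simp [hal]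
      rw [if_pos h, pderiv_prod_X, List.toFinset_cons, sdiff_insert]
      simp only [ha, insert_subset_iff, h, and_true]
    · have h' : ¬insert a l.toFinset ⊆ M := fun h' => h ((subset_insert _ _).trans h')
      rw [if_neg h, map_zero, List.toFinset_cons, if_neg h']

theorem dset_prod_X (S M : Finset σ) :
    dset S (∏ e ∈ M, (X e : MvPolynomial σ R)) =
      if S ⊆ M then ∏ e ∈ M \ S, X e else 0 := by
  rw [dset, foldr_pderiv_prod_X S.nodup_toList, toList_toFinset]

theorem dset_sum {α : Type*} (S : Finset σ) (F : Finset α) (f : α → MvPolynomial σ R) :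
    dset S (∑ a ∈ F, f a) = ∑ a ∈ F, dset S (f a) := by
  unfold dset
  induction S.toList with
  | nil => rfl
  | cons i l ih => simp [ih]

theorem dset_sum_prod_X {α : Type*} (S : Finset σ) (F : Finset α) (f : α → Finset σ) :
    dset S (∑ a ∈ F, ∏ e ∈ f a, (X e : MvPolynomial σ R)) =
      ∑ a ∈ F with S ⊆ f a, ∏ e ∈ f a \ S, X e := by
  simp only [dset_sum, dset_prod_X, sum_ite, sum_const_zero, add_zero]

end PartialDerivatives

theorem eval_one_dset_dset_Phi (K : Type*) [Field K] (U : Finset ℤ) (k : ℕ)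
    (S T : Finset (Finset ℤ)) :
    eval (fun _ => (1 : K)) (dset S (dset T (Phi K U k))) =
      #{M ∈ matchings U k | T ⊆ M ∧ S ⊆ M \ T} := by
  have hPhi : Phi K U k = ∑ M ∈ matchings U k, ∏ e ∈ id M, X e := rfl
  rw [hPhi, dset_sum_prod_X, dset_sum_prod_X, filter_filter, card_eq_sum_ones, Nat.cast_sum,
    map_sum]
  simp

theorem exists_forall_sum_range_mul_eq {K : Type*} [Field K] (a : ℕ → ℕ → K) (b : ℕ → K)
    (N : ℕ) (ha : ∀ m ≤ N, a m m ≠ 0) :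
    ∃ g : ℕ → K, ∀ m ≤ N, ∑ j ∈ range (m + 1), a m j * g j = b m := by
  induction N with
  | zero => exact ⟨fun _ => b 0 / a 0 0, by simp [mul_div_cancel₀ _ (ha 0 le_rfl)]⟩
  | succ N ih =>
    obtain ⟨g, hg⟩ := ih fun m hm => ha m (by omega)
    set g' := Function.update g (N + 1)
      ((b (N + 1) - ∑ j ∈ range (N + 1), a (N + 1) j * g j) / a (N + 1) (N + 1)) with hg'
    refine ⟨g', ?_⟩
    have hlow : ∀ m ≤ N, ∀ j ∈ range (m + 1), g' j = g j :=
      fun m hm j hj => Function.update_of_ne (by rw [mem_range] at hj; omega) _ _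
    intro m hm
    rcases Nat.lt_or_ge m (N + 1) with hmN | hmN
    · rw [sum_congr rfl fun j hj => by rw [hlow m (by omega) j hj]]
      exact hg m (by omega)
    · obtain rfl : m = N + 1 := by omega
      rw [sum_range_succ, sum_congr rfl fun j hj => by rw [hlow N le_rfl j hj],
        hg', Function.update_self, mul_div_cancel₀ _ (ha _ le_rfl)]
      ring

section Disjointness

variable {ι : Type*} [DecidableEq ι]

theorem card_filter_powersetCard_card_inter {S X : Finset ι} (hSX : S ⊆ X) {t j : ℕ}
    (hj : j ≤ t) :
    #{B ∈ X.powersetCard t | #(B ∩ S) = j} = (#S).choose j * (#X - #S).choose (t - j) := by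
  rw [← card_sdiff_of_subset hSX, ← card_powersetCard, ← card_powersetCard, ← card_product]
  refine card_nbij' (fun B => (B ∩ S, B \ S)) (fun P => P.1 ∪ P.2) ?_ ?_ ?_ ?_
  · intro B hB
    simp only [mem_coe, mem_filter, mem_powersetCard] at hB
    obtain ⟨⟨hBX, hBt⟩, hBS⟩ := hB
    have := card_inter_add_card_sdiff B S
    simp only [coe_product, Set.mem_prod, mem_coe, mem_powersetCard]
    exact ⟨⟨inter_subset_right, hBS⟩, sdiff_subset_sdiff hBX subset_rfl, by omega⟩
  · rintro ⟨P, Q⟩ hPQ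
    simp only [coe_product, Set.mem_prod, mem_coe, mem_powersetCard] at hPQ
    obtain ⟨⟨hPS, hPj⟩, hQX, hQt⟩ := hPQ
    have hQS : Disjoint Q S := disjoint_of_subset_left hQX sdiff_disjoint
    have hPQ : Disjoint P Q := disjoint_of_subset_left hPS hQS.symm
    simp only [mem_coe, mem_filter, mem_powersetCard]
    refine ⟨⟨union_subset (hPS.trans hSX) (hQX.trans sdiff_subset), ?_⟩, ?_⟩
    · rw [card_union_of_disjoint hPQ]; omega
    · rwa [union_inter_distrib_right, inter_eq_left.mpr hPS,
        disjoint_iff_inter_eq_empty.mp hQS, union_empty]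
  · intro B _
    exact (union_comm _ _).trans (sdiff_union_inter B S)
  · rintro ⟨P, Q⟩ hPQ
    simp only [coe_product, Set.mem_prod, mem_coe, mem_powersetCard] at hPQ
    obtain ⟨⟨hPS, -⟩, hQX, -⟩ := hPQ
    have hQS : Disjoint Q S := disjoint_of_subset_left hQX sdiff_disjoint
    simp only [union_inter_distrib_right, inter_eq_left.mpr hPS,
      disjoint_iff_inter_eq_empty.mp hQS, union_empty, union_sdiff_distrib,
      sdiff_eq_empty_iff_subset.mpr hPS, sdiff_eq_self_of_disjoint hQS, empty_union]

theorem sum_powersetCard_apply_card_inter {M : Type*} [AddCommMonoid M] (f : ℕ → M)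
    {S X : Finset ι} (hSX : S ⊆ X) (t : ℕ) :
    ∑ B ∈ X.powersetCard t, f #(B ∩ S) =
      ∑ j ∈ range (t + 1), ((#S).choose j * (#X - #S).choose (t - j)) • f j := by
  rw [← sum_fiberwise_of_maps_to (g := fun B => #(B ∩ S)) (t := range (t + 1))]
  · refine sum_congr rfl fun j hj => ?_
    rw [← card_filter_powersetCard_card_inter hSX (by simpa [Nat.lt_succ_iff] using hj),
      ← sum_const]
    exact sum_congr rfl fun B hB => by rw [(mem_filter.mp hB).2]
  · intro B hB
    rw [mem_range, Nat.lt_succ_iff, ← (mem_powersetCard.mp hB).2]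
    exact card_le_card inter_subset_left

theorem sum_disjoint_powersetCard_apply_card_inter {M : Type*} [AddCommMonoid M] (f : ℕ → M)
    {U A C : Finset ι} {t : ℕ} (hA : A ∈ U.powersetCard t) (hC : C ⊆ U) :
    ∑ B ∈ U.powersetCard t with Disjoint A B, f #(B ∩ C) =
      ∑ j ∈ range (t + 1),
        ((#(C \ A)).choose j * (#U - t - #(C \ A)).choose (t - j)) • f j := by
  obtain ⟨hAU, hAt⟩ := mem_powersetCard.mp hA
  have hfilter : {B ∈ U.powersetCard t | Disjoint A B} = (U \ A).powersetCard t := by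
    ext B
    simp only [mem_filter, mem_powersetCard, subset_sdiff, disjoint_comm (a := A)]
    tauto
  have hinter : ∀ B ∈ (U \ A).powersetCard t, B ∩ C = B ∩ (C \ A) := fun B hB => by
    have hBA : Disjoint B A := (subset_sdiff.mp (mem_powersetCard.mp hB).1).2
    rw [← inter_sdiff_assoc,
      sdiff_eq_self_of_disjoint (disjoint_of_subset_left inter_subset_left hBA)]
  rw [hfilter, sum_congr rfl fun B hB => by rw [hinter B hB],
    sum_powersetCard_apply_card_inter f (sdiff_subset_sdiff hC subset_rfl) t,
    card_sdiff_of_subset hAU, hAt]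

def disjointnessMatrix (K : Type*) [Zero K] [One K] (U : Finset ι) (t : ℕ) :
    Matrix (U.powersetCard t) (U.powersetCard t) K :=
  Matrix.of fun A B => if Disjoint A.1 B.1 then 1 else 0

theorem det_disjointnessMatrix_ne_zero (K : Type*) [Field K] [CharZero K] (U : Finset ι)
    {t : ℕ} (ht : 2 * t ≤ #U) : (disjointnessMatrix K U t).det ≠ 0 := by
  -- `a m j` counts the `B` disjoint from `A` with `#(B ∩ C) = j`, where `m = #(C \ A)`
  set a : ℕ → ℕ → K := fun m j => (m.choose j * (#U - t - m).choose (t - j) : ℕ) with ha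
  obtain ⟨g, hg⟩ := exists_forall_sum_range_mul_eq a (fun m => if m = 0 then 1 else 0) t
    fun m hm => by simpa [ha] using (Nat.choose_pos (by omega)).ne'
  let E : Matrix (U.powersetCard t) (U.powersetCard t) K := Matrix.of fun B C => g #(B.1 ∩ C.1)
  refine Matrix.det_ne_zero_of_right_inverse (B := E) ?_
  ext A C
  obtain ⟨hAU, hAt⟩ := mem_powersetCard.mp A.2
  obtain ⟨hCU, hCt⟩ := mem_powersetCard.mp C.2
  set m := #(C.1 \ A.1)
  have hmt : m ≤ t := hCt ▸ card_le_card sdiff_subset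
  have hm0 : m = 0 ↔ A = C := by
    rw [card_eq_zero, sdiff_eq_empty_iff_subset, Subtype.ext_iff]
    exact ⟨fun h => (eq_of_subset_of_card_le h (by omega)).symm, fun h => h ▸ subset_rfl⟩
  calc (disjointnessMatrix K U t * E) A C
      = ∑ B ∈ U.powersetCard t with Disjoint A.1 B, g #(B ∩ C.1) := by
        rw [sum_filter, ← sum_coe_sort]
        simp [disjointnessMatrix, E, Matrix.mul_apply]
    _ = ∑ j ∈ range (m + 1), a m j * g j := by
        rw [sum_disjoint_powersetCard_apply_card_inter g A.2 hCU,
          sum_subset (range_subset_range.mpr (Nat.succ_le_succ hmt)) fun j _ hj => ?_]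
        · simp [ha, m, nsmul_eq_mul]
        · simp [ha, Nat.choose_eq_zero_of_lt (not_lt.mp (mt mem_range.mpr hj))]
    _ = (1 : Matrix _ _ K) A C := by
        rw [hg m hmt, Matrix.one_apply]
        exact if_congr hm0 rfl rfl

end Disjointness

section Matchings

variable {U V W : Finset ℤ} {A B M : Finset (Finset ℤ)} {k : ℕ}

theorem mem_matchings : M ∈ matchings V k ↔ IsMatching V M ∧ #M = k := by
  simp only [matchings, IsMatching, mem_filter, mem_powerset]
  tauto

theorem IsMatching.mono_vertices (hM : IsMatching V M) (hVW : V ⊆ W) : IsMatching W M :=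
  ⟨hM.1.trans (powersetCard_mono hVW), hM.2⟩

theorem IsMatching.eq_of_mem (hM : IsMatching V M) {e f : Finset ℤ} (he : e ∈ M) (hf : f ∈ M)
    {v : ℤ} (hve : v ∈ e) (hvf : v ∈ f) : e = f := by
  by_contra hef
  exact disjoint_left.mp (hM.2 e he f hf hef) hve hvf

theorem IsMatching.disjoint (hA : IsMatching V A) (hB : IsMatching W B) (hVW : Disjoint V W) :
    Disjoint A B := by
  refine disjoint_left.mpr fun e heA heB => ?_
  obtain ⟨heV, he2⟩ := mem_powersetCard.mp (hA.1 heA)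
  obtain ⟨v, hv⟩ := card_pos.mp (he2 ▸ two_pos : 0 < #e)
  exact disjoint_left.mp hVW (heV hv) ((mem_powersetCard.mp (hB.1 heB)).1 hv)

theorem IsMatching.union (hA : IsMatching V A) (hB : IsMatching W B) (hVW : Disjoint V W) :
    IsMatching (V ∪ W) (A ∪ B) := by
  refine ⟨union_subset (hA.mono_vertices subset_union_left).1
    (hB.mono_vertices subset_union_right).1, ?_⟩
  have hcross : ∀ e ∈ A, ∀ f ∈ B, Disjoint e f := fun e he f hf =>
    hVW.mono (mem_powersetCard.mp (hA.1 he)).1 (mem_powersetCard.mp (hB.1 hf)).1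
  intro e he f hf hef
  rcases mem_union.mp he with he | he <;> rcases mem_union.mp hf with hf | hf
  · exact hA.2 e he f hf hef
  · exact hcross e he f hf
  · exact (hcross f hf e he).symm
  · exact hB.2 e he f hf hef

def IsPerfectMatching (V : Finset ℤ) (M : Finset (Finset ℤ)) : Prop :=
  IsMatching V M ∧ M.biUnion id = V

theorem IsPerfectMatching.exists_mem (hM : IsPerfectMatching V M) {v : ℤ} (hv : v ∈ V) :
    ∃ e ∈ M, v ∈ e := by
  simpa [← hM.2] using hv

theorem IsPerfectMatching.union (hA : IsPerfectMatching V A) (hB : IsPerfectMatching W B)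
    (hVW : Disjoint V W) : IsPerfectMatching (V ∪ W) (A ∪ B) :=
  ⟨hA.1.union hB.1 hVW, by rw [union_biUnion, hA.2, hB.2]⟩

theorem card_filter_matchings_superset (hA : IsPerfectMatching V A) (hVU : V ⊆ U)
    (hk : #A ≤ k) : #{M ∈ matchings U k | A ⊆ M} = #(matchings (U \ V) (k - #A)) := by
  have hsdiff : ∀ N ∈ matchings (U \ V) (k - #A), Disjoint N A := fun N hN =>
    (mem_matchings.mp hN).1.disjoint hA.1 sdiff_disjoint
  refine card_nbij' (fun M => M \ A) (fun N => N ∪ A) ?_ ?_ ?_ ?_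
  · intro M hM
    simp only [mem_coe, mem_filter, mem_matchings] at hM ⊢
    obtain ⟨⟨hM, hMk⟩, hAM⟩ := hM
    refine ⟨⟨fun e he => ?_, fun e he f hf =>
      hM.2 e (mem_sdiff.mp he).1 f (mem_sdiff.mp hf).1⟩, by rw [card_sdiff_of_subset hAM, hMk]⟩
    obtain ⟨heM, heA⟩ := mem_sdiff.mp he
    obtain ⟨heU, he2⟩ := mem_powersetCard.mp (hM.1 heM)
    refine mem_powersetCard.mpr ⟨fun v hv => mem_sdiff.mpr ⟨heU hv, fun hvV => ?_⟩, he2⟩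
    obtain ⟨f, hfA, hvf⟩ := hA.exists_mem hvV
    exact heA (hM.eq_of_mem heM (hAM hfA) hv hvf ▸ hfA)
  · intro N hN
    have hNA := hsdiff N hN
    simp only [mem_coe, mem_filter, mem_matchings] at hN ⊢
    refine ⟨⟨sdiff_union_of_subset hVU ▸ hN.1.union hA.1 sdiff_disjoint, ?_⟩,
      subset_union_right⟩
    rw [card_union_of_disjoint hNA, hN.2]
    omega
  · intro M hM
    exact sdiff_union_of_subset (mem_filter.mp hM).2
  · intro N hN
    exact union_sdiff_cancel_right (hsdiff N hN)

theorem card_filter_matchings_superset_pair (hA : IsPerfectMatching V A)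
    (hB : IsPerfectMatching W B) (hVU : V ⊆ U) (hWU : W ⊆ U) (hk : #A + #B ≤ k) :
    #{M ∈ matchings U k | B ⊆ M ∧ A ⊆ M \ B} =
      if Disjoint V W then #(matchings (U \ (V ∪ W)) (k - (#A + #B))) else 0 := by
  split_ifs with hVW
  · have hAB : Disjoint A B := hA.1.disjoint hB.1 hVW
    have hfilter :
        {M ∈ matchings U k | B ⊆ M ∧ A ⊆ M \ B} = {M ∈ matchings U k | A ∪ B ⊆ M} :=
      filter_congr fun M _ => by
        rw [subset_sdiff, union_subset_iff]
        tauto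
    rw [hfilter, card_filter_matchings_superset (hA.union hB hVW) (union_subset hVU hWU)
      (by rwa [card_union_of_disjoint hAB]), card_union_of_disjoint hAB]
  · rw [card_eq_zero, filter_eq_empty_iff]
    rintro M hM ⟨hBM, hAMB⟩
    obtain ⟨v, hvV, hvW⟩ := not_disjoint_iff.mp hVW
    obtain ⟨e, heA, hve⟩ := hA.exists_mem hvV
    obtain ⟨f, hfB, hvf⟩ := hB.exists_mem hvW
    obtain ⟨heM, heB⟩ := mem_sdiff.mp (hAMB heA)
    exact heB ((mem_matchings.mp hM).1.eq_of_mem heM (hBM hfB) hve hvf ▸ hfB)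

end Matchings

section Transport

variable {W : Finset ℤ} {M : Finset (Finset ℤ)} {k : ℕ} {g : ℤ → ℤ}

theorem image_image_mem_matchings (hg : Set.InjOn g W) (hM : M ∈ matchings W k) :
    M.image (image g) ∈ matchings (W.image g) k := by
  obtain ⟨hM, hMk⟩ := mem_matchings.mp hM
  have hsub : ∀ e ∈ M, e ⊆ W := fun e he => (mem_powersetCard.mp (hM.1 he)).1
  refine mem_matchings.mpr ⟨⟨fun e' he' => ?_, fun e' he' f' hf' hef => ?_⟩, ?_⟩
  · obtain ⟨e, he, rfl⟩ := mem_image.mp he'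
    refine mem_powersetCard.mpr ⟨image_subset_image (hsub e he), ?_⟩
    rw [card_image_of_injOn (hg.mono (coe_subset.mpr (hsub e he)))]
    exact (mem_powersetCard.mp (hM.1 he)).2
  · obtain ⟨e, he, rfl⟩ := mem_image.mp he'
    obtain ⟨f, hf, rfl⟩ := mem_image.mp hf'
    have hef' : e ≠ f := fun h => hef (h ▸ rfl)
    refine disjoint_left.mpr fun x hxe hxf => ?_
    obtain ⟨a, ha, rfl⟩ := mem_image.mp hxe
    obtain ⟨b, hb, hba⟩ := mem_image.mp hxf
    obtain rfl : b = a := hg (hsub f hf hb) (hsub e he ha) hba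
    exact disjoint_left.mp (hM.2 e he f hf hef') ha hb
  · rw [card_image_of_injOn fun e he f hf hef =>
      (image_eq_image_iff_of_injOn hg (hsub e he) (hsub f hf)).mp hef, hMk]

theorem image_image_eq_self_of_leftInvOn {g' : ℤ → ℤ} (hgg' : Set.LeftInvOn g' g W)
    (hM : M ∈ matchings W k) : (M.image (image g)).image (image g') = M := by
  have hsub : ∀ e ∈ M, e ⊆ W := fun e he =>
    (mem_powersetCard.mp ((mem_matchings.mp hM).1.1 he)).1
  rw [image_image]
  refine (image_congr fun e he => ?_).trans image_id'
  rw [Function.comp_apply, image_image]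
  exact (image_congr fun x hx => hgg' (hsub e he hx)).trans image_id'

theorem card_matchings_congr {W' : Finset ℤ} (h : #W = #W') (k : ℕ) :
    #(matchings W k) = #(matchings W' k) := by
  obtain ⟨g, hg⟩ := W.finite_toSet.exists_bijOn_of_encard_eq (t := (W' : Set ℤ)) (by simpa)
  have hinv := hg.invOn_invFunOn
  have hg' := hg.symm hinv.symm
  have himage : ∀ {f : ℤ → ℤ} {s t : Finset ℤ}, Set.BijOn f s t → s.image f = t :=
    fun hf => coe_injective (by rw [coe_image, hf.image_eq])
  refine card_nbij' (fun M => M.image (image g)) (fun M => M.image (image (Function.invFunOn g W)))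
    (fun M hM => ?_) (fun M hM => ?_) (fun M hM => image_image_eq_self_of_leftInvOn hinv.1 hM)
    (fun M hM => image_image_eq_self_of_leftInvOn hinv.2 hM)
  · simpa only [himage hg, mem_coe] using image_image_mem_matchings hg.injOn (mem_coe.mp hM)
  · simpa only [himage hg', mem_coe] using image_image_mem_matchings hg'.injOn (mem_coe.mp hM)

end Transport

section Pairing

variable {g : ℕ → ℤ} {d : ℕ}

def pairEdges (g : ℕ → ℤ) (d : ℕ) : Finset (Finset ℤ) :=
  (range d).image fun i => {g (2 * i), g (2 * i + 1)}

theorem mem_pair_iff (hg : Set.InjOn g (range (2 * d))) {a i : ℕ} (ha : a < 2 * d) (hi : i < d) :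
    g a ∈ ({g (2 * i), g (2 * i + 1)} : Finset ℤ) ↔ a / 2 = i := by
  have hmem : ∀ b < 2 * d, b ∈ (range (2 * d) : Set ℕ) := fun b hb => by simpa using hb
  rw [mem_insert, mem_singleton, hg.eq_iff (hmem a ha) (hmem _ (by omega)),
    hg.eq_iff (hmem a ha) (hmem _ (by omega))]
  omega

theorem isPerfectMatching_pairEdges (hg : Set.InjOn g (range (2 * d))) :
    IsPerfectMatching ((range (2 * d)).image g) (pairEdges g d) := by
  have hV : ∀ a < 2 * d, g a ∈ (range (2 * d)).image g := fun a ha =>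
    mem_image_of_mem g (mem_range.mpr ha)
  have hedge : ∀ i < d, ({g (2 * i), g (2 * i + 1)} : Finset ℤ) ⊆ (range (2 * d)).image g :=
    fun i hi => insert_subset (hV _ (by omega)) (singleton_subset_iff.mpr (hV _ (by omega)))
  refine ⟨⟨fun e he => ?_, fun e he f hf hef => ?_⟩, ?_⟩
  · obtain ⟨i, hi, rfl⟩ := mem_image.mp he
    rw [mem_range] at hi
    refine mem_powersetCard.mpr ⟨hedge i hi, card_pair fun h => ?_⟩
    have := hg (by rw [coe_range, Set.mem_Iio]; omega) (by rw [coe_range, Set.mem_Iio]; omega) h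
    omega
  · obtain ⟨i, hi, rfl⟩ := mem_image.mp he
    obtain ⟨j, hj, rfl⟩ := mem_image.mp hf
    rw [mem_range] at hi hj
    refine disjoint_left.mpr fun x hxi hxj => hef ?_
    obtain ⟨a, ha, rfl⟩ := mem_image.mp (hedge i hi hxi)
    rw [mem_range] at ha
    rw [← (mem_pair_iff hg ha hi).mp hxi, (mem_pair_iff hg ha hj).mp hxj]
  · refine Subset.antisymm (biUnion_subset.mpr fun e he => ?_) fun v hv => ?_
    · obtain ⟨i, hi, rfl⟩ := mem_image.mp he
      exact hedge i (mem_range.mp hi)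
    · obtain ⟨a, ha, rfl⟩ := mem_image.mp hv
      rw [mem_range] at ha
      refine mem_biUnion.mpr ⟨_, mem_image_of_mem _ (mem_range.mpr (by omega : a / 2 < d)), ?_⟩
      exact (mem_pair_iff hg ha (by omega)).mpr rfl

theorem card_pairEdges (hg : Set.InjOn g (range (2 * d))) : #(pairEdges g d) = d := by
  rw [pairEdges, card_image_of_injOn, card_range]
  intro i hi j hj hij
  rw [coe_range, Set.mem_Iio] at hi hj
  have hmem : g (2 * i) ∈ ({g (2 * j), g (2 * j + 1)} : Finset ℤ) := by
    simp only at hij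
    exact hij ▸ mem_insert_self _ _
  have := (mem_pair_iff hg (by omega) hj).mp hmem
  omega

end Pairing

section CanonicalMatching

variable {V : Finset ℤ} {d : ℕ}

theorem canonMatching_eq_pairEdges (hV : #V = 2 * d) :
    canonMatching V = pairEdges (fun j => (V.sort (· ≤ ·)).getD j 0) d := by
  rw [canonMatching, hV, Nat.mul_div_cancel_left d two_pos, pairEdges]

theorem injOn_sort_getD (hV : #V = 2 * d) :
    Set.InjOn (fun j => (V.sort (· ≤ ·)).getD j 0) (range (2 * d)) := by
  intro a ha b hb hab
  simp only [coe_range, Set.mem_Iio, ← hV, ← length_sort (· ≤ ·)] at ha hb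
  simp only [List.getD_eq_getElem _ _ ha, List.getD_eq_getElem _ _ hb] at hab
  exact (V.sort_nodup (· ≤ ·)).getElem_inj_iff.mp hab

theorem image_sort_getD (hV : #V = 2 * d) :
    (range (2 * d)).image (fun j => (V.sort (· ≤ ·)).getD j 0) = V := by
  ext v
  rw [mem_image, ← mem_sort (· ≤ ·), List.mem_iff_getElem]
  simp only [mem_range, ← hV, ← length_sort (· ≤ ·)]
  constructor
  · rintro ⟨a, ha, rfl⟩
    exact ⟨a, ha, (List.getD_eq_getElem _ _ ha).symm⟩
  · rintro ⟨a, ha, rfl⟩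
    exact ⟨a, ha, List.getD_eq_getElem _ _ ha⟩

theorem isPerfectMatching_canonMatching (hV : #V = 2 * d) :
    IsPerfectMatching V (canonMatching V) := by
  simpa only [canonMatching_eq_pairEdges hV, image_sort_getD hV] using
    isPerfectMatching_pairEdges (injOn_sort_getD hV)

theorem card_canonMatching (hV : #V = 2 * d) : #(canonMatching V) = d := by
  rw [canonMatching_eq_pairEdges hV, card_pairEdges (injOn_sort_getD hV)]

theorem matchings_nonempty {W : Finset ℤ} (h : 2 * d ≤ #W) : (matchings W d).Nonempty := by
  obtain ⟨V, hVW, hV⟩ := exists_subset_card_eq h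
  exact ⟨canonMatching V, mem_matchings.mpr
    ⟨(isPerfectMatching_canonMatching hV).1.mono_vertices hVW, card_canonMatching hV⟩⟩

end CanonicalMatching

theorem eval_one_hessian_entry (K : Type*) [Field K] {U V V' W : Finset ℤ} {k d : ℕ}
    (hV : V ∈ U.powersetCard (2 * d)) (hV' : V' ∈ U.powersetCard (2 * d)) (hdk : 2 * d ≤ k)
    (hW : #W = #U - 4 * d) :
    eval (fun _ => (1 : K)) (dset (canonMatching V) (dset (canonMatching V') (Phi K U k))) =
      if Disjoint V V' then (#(matchings W (k - 2 * d)) : K) else 0 := by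
  obtain ⟨hVU, hVd⟩ := mem_powersetCard.mp hV
  obtain ⟨hV'U, hV'd⟩ := mem_powersetCard.mp hV'
  rw [eval_one_dset_dset_Phi, card_filter_matchings_superset_pair
    (isPerfectMatching_canonMatching hVd) (isPerfectMatching_canonMatching hV'd) hVU hV'U
    (by rw [card_canonMatching hVd, card_canonMatching hV'd]; omega),
    card_canonMatching hVd, card_canonMatching hV'd, ← two_mul]
  split_ifs with hdisj
  · have hcard : #(U \ (V ∪ V')) = #W := by
      rw [hW, card_sdiff_of_subset (union_subset hVU hV'U), card_union_of_disjoint hdisj, hVd,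
        hV'd]
      omega
    rw [card_matchings_congr hcard]
  · exact Nat.cast_zero

theorem det_hessian_ne_zero_general {K : Type*} [Field K] [CharZero K]
    (U : Finset ℤ) (k : ℕ) (hk : 2 * k ≤ U.card)
    (d : ℕ) (hd : 2 * d ≤ k) :
    eval (fun _ => (1 : K))
      (Matrix.det (Matrix.of fun V V' : (U.powersetCard (2 * d) : Finset (Finset ℤ)) =>
        dset (canonMatching V.1) (dset (canonMatching V'.1) (Phi K U k)))) ≠ 0 ∧
    Matrix.det (Matrix.of fun V V' : (U.powersetCard (2 * d) : Finset (Finset ℤ)) =>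
        dset (canonMatching V.1) (dset (canonMatching V'.1) (Phi K U k))) ≠ 0 := by
  set H := Matrix.of fun V V' : (U.powersetCard (2 * d) : Finset (Finset ℤ)) =>
    dset (canonMatching V.1) (dset (canonMatching V'.1) (Phi K U k))
  obtain ⟨W, -, hW⟩ := exists_subset_card_eq (s := U) (n := #U - 4 * d) (by omega)
  set c := #(matchings W (k - 2 * d))
  have hc : (c : K) ≠ 0 := Nat.cast_ne_zero.mpr (card_pos.mpr (matchings_nonempty (by omega))).ne'
  have hmap : H.map (eval fun _ => (1 : K)) = (c : K) • disjointnessMatrix K U (2 * d) := by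
    ext V V'
    simp only [H, Matrix.map_apply, Matrix.of_apply, Matrix.smul_apply, disjointnessMatrix,
      eval_one_hessian_entry K V.2 V'.2 (by omega) hW, smul_eq_mul, mul_ite, mul_one, mul_zero, c]
  have hne : eval (fun _ => (1 : K)) H.det ≠ 0 := by
    rw [RingHom.map_det, RingHom.mapMatrix_apply, hmap, Matrix.det_smul]
    exact mul_ne_zero (pow_ne_zero _ hc) (det_disjointnessMatrix_ne_zero K U (by omega))
  exact ⟨hne, fun h => hne (by rw [h, map_zero])⟩

/-- when `2k ≤ |U|` and `2d ≤ k`, the evaluation at `x_e = 1` of the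
determinant of `H_{U,k,d} = (∂^{M(V)} ∂^{M(V')} Φ_{U,k})_{V,V' ∈ C(U,2d)}` is a nonzero
element of `K`; in particular `det H_{U,k,d}` is a nonzero polynomial. -/
theorem det_hessian_ne_zero {K : Type*} [Field K] [CharZero K]
    (U : Finset ℤ) (hU : U.Nonempty) (k : ℕ) (hk : 2 * k ≤ U.card)
    (d : ℕ) (hd : 2 * d ≤ k) :
    eval (fun _ => (1 : K))
      (Matrix.det (Matrix.of fun V V' : (U.powersetCard (2 * d) : Finset (Finset ℤ)) =>
        dset (canonMatching V.1) (dset (canonMatching V'.1) (Phi K U k)))) ≠ 0 ∧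
    Matrix.det (Matrix.of fun V V' : (U.powersetCard (2 * d) : Finset (Finset ℤ)) =>
        dset (canonMatching V.1) (dset (canonMatching V'.1) (Phi K U k))) ≠ 0 :=
  det_hessian_ne_zero_general U k hk d hd
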